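/- Let M be symmetric positive definite, S^+ = ½(−M + √(M²+4M)), and P = (I + M + S^+)^{-1}. Then there exists κ₀ ∈ (0,1) such that for all x ∈ ℝ^d, xᵀ Pᵀ S^+ P x ≤ κ₀² xᵀ S^+ x. -/

import Mathlib

/-
Everything in sight is a function of `M`: `S⁺ = r(M)` with `r t = (√(t² + 4t) - t) / 2 ≥ 0`, and
`P = a(M)⁻¹` with `a t = 1 + t + r t`, so `Pᵀ S⁺ P = (r / a²)(M)`. The spectrum of `M` is finite and
positive, hence contained in `[m, ∞)` for some `m > 0`, where `1 / a² ≤ (1 + m)⁻²`; the continuous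
functional calculus turns this scalar bound into `Pᵀ S⁺ P ≤ (1 + m)⁻² S⁺`.
-/

open Matrix

noncomputable def Matrix.PosSemidef.sqrt {n : Type*} [Fintype n] {𝕜 : Type*} [RCLike 𝕜]
    [PartialOrder 𝕜] [DecidableEq n] {A : Matrix n n 𝕜} (hA : A.PosSemidef) : Matrix n n 𝕜 :=
  hA.1.eigenvectorUnitary.1 * diagonal ((↑) ∘ (√·) ∘ hA.1.eigenvalues) *
    (star hA.1.eigenvectorUnitary : Matrix n n 𝕜)

open scoped MatrixOrder

/- The eigenvalue of `S⁺` over an eigenvalue `t` of `M`: the nonnegative root of `s ^ 2 + t * s = t`. -/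
noncomputable def riccatiRoot (t : ℝ) : ℝ := (√(t ^ 2 + 4 * t) - t) / 2

lemma riccatiRoot_nonneg {t : ℝ} (ht : 0 ≤ t) : 0 ≤ riccatiRoot t := by
  have : t ≤ √(t ^ 2 + 4 * t) := Real.le_sqrt_of_sq_le (by nlinarith)
  unfold riccatiRoot
  linarith

lemma Set.Finite.exists_pos_forall_le {s : Set ℝ} (hs : s.Finite) (h : ∀ t ∈ s, 0 < t) :
    ∃ m, 0 < m ∧ ∀ t ∈ s, m ≤ t := by
  rcases s.eq_empty_or_nonempty with rfl | hne
  · exact ⟨1, one_pos, by simp⟩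
  · obtain ⟨m, hm, hmin⟩ := hs.isCompact.exists_isMinOn hne continuousOn_id
    exact ⟨m, h m hm, hmin⟩

lemma inv_mul_riccatiRoot_mul_inv_le {m t : ℝ} (hm : 0 < m) (hmt : m ≤ t) :
    (1 + t + riccatiRoot t)⁻¹ * riccatiRoot t * (1 + t + riccatiRoot t)⁻¹ ≤
      (1 / (1 + m)) ^ 2 * riccatiRoot t := by
  have hr := riccatiRoot_nonneg (hm.le.trans hmt)
  have hinv : (1 + t + riccatiRoot t)⁻¹ ≤ 1 / (1 + m) := by
    rw [one_div]; exact inv_anti₀ (by linarith) (by linarith)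
  have hinv_nonneg : 0 ≤ (1 + t + riccatiRoot t)⁻¹ := inv_nonneg.mpr (by linarith)
  calc (1 + t + riccatiRoot t)⁻¹ * riccatiRoot t * (1 + t + riccatiRoot t)⁻¹
      = (1 + t + riccatiRoot t)⁻¹ ^ 2 * riccatiRoot t := by ring
    _ ≤ (1 / (1 + m)) ^ 2 * riccatiRoot t := by gcongr

namespace Matrix

variable {n : Type*} [Fintype n]

lemma dotProduct_mulVec_le_of_le {A B : Matrix n n ℝ} (h : A ≤ B) (x : n → ℝ) :
    x ⬝ᵥ A *ᵥ x ≤ x ⬝ᵥ B *ᵥ x := by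
  have := (le_iff.mp h).dotProduct_mulVec_nonneg x
  simp only [star_trivial, sub_mulVec, dotProduct_sub] at this
  linarith

variable [DecidableEq n]

lemma PosSemidef.sqrt_eq_cfc {A : Matrix n n ℝ} (hA : A.PosSemidef) :
    hA.sqrt = cfc Real.sqrt A := by
  rw [hA.1.cfc_eq]
  simp [Matrix.PosSemidef.sqrt, IsHermitian.cfc, Unitary.conjStarAlgAut_apply]

lemma transpose_cfc (f : ℝ → ℝ) (A : Matrix n n ℝ) : (cfc f A)ᵀ = cfc f A := by
  rw [← conjTranspose_eq_transpose_of_trivial]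
  exact cfc_predicate f A

lemma continuousOn_spectrum (f : ℝ → ℝ) (A : Matrix n n ℝ) : ContinuousOn f (spectrum ℝ A) :=
  (finite_spectrum A).continuousOn f

lemma inv_cfc {A : Matrix n n ℝ} (hA : A.IsHermitian) {f : ℝ → ℝ}
    (hf : ∀ t ∈ spectrum ℝ A, f t ≠ 0) : (cfc f A)⁻¹ = cfc (fun t ↦ (f t)⁻¹) A := by
  rw [nonsing_inv_eq_ringInverse]
  exact (cfc_inv f A hf (continuousOn_spectrum f A) hA).symm

lemma half_smul_neg_add_sqrt_eq_cfc_riccatiRoot {M : Matrix n n ℝ} (hM : M.IsHermitian)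
    (hP : (M ^ 2 + (4 : ℝ) • M).PosSemidef) :
    (1 / 2 : ℝ) • (-M + hP.sqrt) = cfc riccatiRoot M := by
  have hpoly : M ^ 2 + (4 : ℝ) • M = cfc (fun t : ℝ ↦ t ^ 2 + 4 * t) M := by
    rw [cfc_add .., cfc_pow .., cfc_const_mul .., cfc_id' ℝ M]
  have hsqrt : hP.sqrt = cfc (fun t ↦ √(t ^ 2 + 4 * t)) M := by
    rw [hP.sqrt_eq_cfc, hpoly, ← cfc_comp' ..]
  have : riccatiRoot = fun t ↦ (1 / 2 : ℝ) * (√(t ^ 2 + 4 * t) - t) := by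
    ext t; unfold riccatiRoot; ring
  rw [hsqrt, this, cfc_const_mul .., cfc_sub .., cfc_id' ℝ M, neg_add_eq_sub]

end Matrix

theorem stmt3 {d : ℕ} (M : Matrix (Fin d) (Fin d) ℝ)
    (hM : M.PosDef)
    (hP : (M ^ 2 + (4 : ℝ) • M).PosSemidef) :
    let Sp := (1/2 : ℝ) • (-M + hP.sqrt)
    let P := (1 + M + Sp)⁻¹
    ∃ κ₀ : ℝ, 0 < κ₀ ∧ κ₀ < 1 ∧ ∀ x : Fin d → ℝ,
      x ⬝ᵥ (Pᵀ * Sp * P).mulVec x ≤ κ₀ ^ 2 * (x ⬝ᵥ Sp.mulVec x) := by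
  intro Sp P
  have hcont (f : ℝ → ℝ) := continuousOn_spectrum f M
  obtain ⟨m, hm, hm_le⟩ := (finite_spectrum M).exists_pos_forall_le
    fun t ht ↦ hM.isStrictlyPositive.spectrum_pos ht
  have hSp : Sp = cfc riccatiRoot M := half_smul_neg_add_sqrt_eq_cfc_riccatiRoot hM.1 hP
  have hP_eq : P = cfc (fun t ↦ (1 + t + riccatiRoot t)⁻¹) M := by
    have h1 : 1 + M + Sp = cfc (fun t ↦ 1 + t + riccatiRoot t) M := by
      rw [hSp, cfc_add (hg := hcont _) .., cfc_const_add .., cfc_id' ℝ M, map_one]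
    refine (congrArg _ h1).trans (inv_cfc hM.1 fun t ht ↦ ?_)
    have := riccatiRoot_nonneg (hm.trans_le (hm_le t ht)).le
    linarith [hm_le t ht]
  have hPSP : Pᵀ * Sp * P =
      cfc (fun t ↦ (1 + t + riccatiRoot t)⁻¹ * riccatiRoot t * (1 + t + riccatiRoot t)⁻¹) M := by
    rw [hP_eq, hSp, transpose_cfc, ← cfc_mul (hf := hcont _) (hg := hcont _),
      ← cfc_mul (hf := hcont _) (hg := hcont _)]
  have hle : Pᵀ * Sp * P ≤ (1 / (1 + m)) ^ 2 • Sp := by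
    rw [hPSP, hSp, ← cfc_const_mul (hf := hcont _), cfc_le_iff (hf := hcont _) (hg := hcont _)]
    exact fun t ht ↦ inv_mul_riccatiRoot_mul_inv_le hm (hm_le t ht)
  refine ⟨1 / (1 + m), by positivity, by rw [div_lt_one (by linarith)]; linarith, fun x ↦ ?_⟩
  simpa only [smul_mulVec, dotProduct_smul, smul_eq_mul] using dotProduct_mulVec_le_of_le hle x
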